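/- arXiv:1308.6736 — 2 statements merged into one kernel-verified Lean document; each statement's English description precedes it below -/
import Mathlib

section
/- For any random variables M, X, Y, Z, S, K on a common probability space, each taking values in a nonempty finite set, the following information inequality holds: H(M) ≤ I(M ; Z) + H(M | (Y, K, S)) + H(K | (Z, S)) + I((M, X) ; Y | (K, Z, S)) + H(S | Z). -/
open MeasureTheory ProbabilityTheory Real

/-- Shannon entropy (natural log) of a finitely-valued random variable. -/
noncomputable def ent {Ω : Type*} [MeasurableSpace Ω] (μ : Measure Ω)
    {α : Type*} [Fintype α] (X : Ω → α) : ℝ :=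
  ∑ x : α, Real.negMulLog ((μ (X ⁻¹' {x})).toReal)

/-- Conditional Shannon entropy `H(X|Y) = H(X,Y) - H(Y)`. -/
noncomputable def condEnt {Ω : Type*} [MeasurableSpace Ω] (μ : Measure Ω)
    {α β : Type*} [Fintype α] [Fintype β] (X : Ω → α) (Y : Ω → β) : ℝ :=
  ent μ (fun ω => (X ω, Y ω)) - ent μ Y

/-- Mutual information `I(X;Y) = H(X) + H(Y) - H(X,Y)`. -/
noncomputable def mutInfo {Ω : Type*} [MeasurableSpace Ω] (μ : Measure Ω)
    {α β : Type*} [Fintype α] [Fintype β] (X : Ω → α) (Y : Ω → β) : ℝ :=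
  ent μ X + ent μ Y - ent μ (fun ω => (X ω, Y ω))

/-- Conditional mutual information `I(X;Y|Z) = H(X|Z) + H(Y|Z) - H(X,Y|Z)`. -/
noncomputable def condMutInfo {Ω : Type*} [MeasurableSpace Ω] (μ : Measure Ω)
    {α β γ : Type*} [Fintype α] [Fintype β] [Fintype γ]
    (X : Ω → α) (Y : Ω → β) (Z : Ω → γ) : ℝ :=
  condEnt μ X Z + condEnt μ Y Z - condEnt μ (fun ω => (X ω, Y ω)) Z


set_option linter.unusedSectionVars false

section AuxCore


lemma nm_expand {ι : Type*} [Fintype ι] (t : ℝ) (f : ι → ℝ) (h : t = ∑ i, f i) :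
    negMulLog t = ∑ i, -(f i) * Real.log t := by
  have h2 : ∑ i, -(f i) * Real.log t = -(∑ i, f i) * Real.log t := by
    rw [← Finset.sum_neg_distrib, Finset.sum_mul]
  rw [h2, ← h, negMulLog]

lemma reord3 {α β γ : Type*} [Fintype α] [Fintype β] [Fintype γ] (F : α → β → γ → ℝ) :
    ∑ b, ∑ c, ∑ a, F a b c = ∑ a, ∑ b, ∑ c, F a b c := by
  rw [show (∑ b, ∑ c, ∑ a, F a b c) = ∑ b, ∑ a, ∑ c, F a b c from
    Finset.sum_congr rfl fun b _ => Finset.sum_comm, Finset.sum_comm]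

lemma submod_core {α β γ : Type*} [Fintype α] [Fintype β] [Fintype γ]
    (p : α × β × γ → ℝ) (pAB : α × β → ℝ) (pBC : β × γ → ℝ) (pB : β → ℝ)
    (hp0 : ∀ x, 0 ≤ p x)
    (hAB : ∀ a b, pAB (a, b) = ∑ c, p (a, b, c))
    (hBC : ∀ b c, pBC (b, c) = ∑ a, p (a, b, c))
    (hB : ∀ b, pB b = ∑ a, ∑ c, p (a, b, c))
    (hsum : ∑ x, p x = 1) :
    ∑ x : α × β × γ, negMulLog (p x) + ∑ b, negMulLog (pB b)
      ≤ ∑ x : α × β, negMulLog (pAB x) + ∑ x : β × γ, negMulLog (pBC x) := by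
  classical
  -- basic positivity of marginals and pointwise domination
  have hAB0 : ∀ a b, 0 ≤ pAB (a, b) := fun a b => (hAB a b) ▸ Finset.sum_nonneg fun c _ => hp0 _
  have hBC0 : ∀ b c, 0 ≤ pBC (b, c) := fun b c => (hBC b c) ▸ Finset.sum_nonneg fun a _ => hp0 _
  have hB0 : ∀ b, 0 ≤ pB b := fun b =>
    (hB b) ▸ Finset.sum_nonneg fun a _ => Finset.sum_nonneg fun c _ => hp0 _
  have hleAB : ∀ a b c, p (a, b, c) ≤ pAB (a, b) := fun a b c => by
    rw [hAB a b]
    exact Finset.single_le_sum (f := fun c => p (a, b, c)) (fun _ _ => hp0 _) (Finset.mem_univ c)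
  have hleBC : ∀ a b c, p (a, b, c) ≤ pBC (b, c) := fun a b c => by
    rw [hBC b c]
    exact Finset.single_le_sum (f := fun a => p (a, b, c)) (fun _ _ => hp0 _) (Finset.mem_univ a)
  have hleB : ∀ a b c, p (a, b, c) ≤ pB b := fun a b c => by
    rw [hB b]
    calc p (a, b, c) ≤ ∑ c, p (a, b, c) :=
          Finset.single_le_sum (f := fun c => p (a, b, c)) (fun _ _ => hp0 _) (Finset.mem_univ c)
      _ ≤ ∑ a, ∑ c, p (a, b, c) :=
          Finset.single_le_sum (f := fun a => ∑ c, p (a, b, c))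
            (fun _ _ => Finset.sum_nonneg fun _ _ => hp0 _) (Finset.mem_univ a)
  -- iterated sum of p is 1
  have hsum' : ∑ a, ∑ b, ∑ c, p (a, b, c) = 1 := by
    rw [← hsum]; simp [Fintype.sum_prod_type]
  -- marginal sums of pAB, pBC over the remaining variable
  have hABsum : ∀ b, ∑ a, pAB (a, b) = pB b := fun b => by
    rw [hB b]; exact Finset.sum_congr rfl fun a _ => hAB a b
  have hBCsum : ∀ b, ∑ c, pBC (b, c) = pB b := fun b => by
    rw [hB b, Finset.sum_comm]; exact Finset.sum_congr rfl fun c _ => hBC b c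
  have hpBsum : ∑ b, pB b = 1 := by
    rw [← hsum']
    rw [show (∑ b, pB b) = ∑ b, ∑ a, ∑ c, p (a, b, c) from Finset.sum_congr rfl fun b _ => hB b]
    exact Finset.sum_comm
  -- rewrite goal as iterated triple sums
  simp only [Fintype.sum_prod_type]
  have eq1 : ∑ a, ∑ b, negMulLog (pAB (a, b))
      = ∑ a, ∑ b, ∑ c, -(p (a, b, c)) * Real.log (pAB (a, b)) :=
    Finset.sum_congr rfl fun a _ => Finset.sum_congr rfl fun b _ =>
      nm_expand _ _ (hAB a b)
  have eq2 : ∑ b, ∑ c, negMulLog (pBC (b, c))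
      = ∑ a, ∑ b, ∑ c, -(p (a, b, c)) * Real.log (pBC (b, c)) := by
    rw [← reord3]
    exact Finset.sum_congr rfl fun b _ => Finset.sum_congr rfl fun c _ =>
      nm_expand _ _ (hBC b c)
  have eq3 : ∑ b, negMulLog (pB b)
      = ∑ a, ∑ b, ∑ c, -(p (a, b, c)) * Real.log (pB b) := by
    have : ∀ b, negMulLog (pB b) = ∑ a, ∑ c, -(p (a, b, c)) * Real.log (pB b) := by
      intro b
      rw [nm_expand (pB b) (fun a => ∑ c, p (a, b, c)) (hB b)]
      exact Finset.sum_congr rfl fun a _ => by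
        rw [← Finset.sum_neg_distrib, Finset.sum_mul]
    rw [show (∑ b, negMulLog (pB b)) = ∑ b, ∑ a, ∑ c, -(p (a, b, c)) * Real.log (pB b) from
      Finset.sum_congr rfl fun b _ => this b, Finset.sum_comm]
  have eq4 : ∑ a, ∑ b, ∑ c, negMulLog (p (a, b, c))
      = ∑ a, ∑ b, ∑ c, -(p (a, b, c)) * Real.log (p (a, b, c)) := rfl
  rw [eq1, eq2, eq3, eq4]
  -- reduce to nonnegativity of the Gibbs sum
  rw [← sub_nonneg]
  have expand : ∑ a, ∑ b, ∑ c,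
        (-(p (a, b, c)) * Real.log (pAB (a, b)) + -(p (a, b, c)) * Real.log (pBC (b, c))
          - -(p (a, b, c)) * Real.log (p (a, b, c)) - -(p (a, b, c)) * Real.log (pB b))
      = (∑ a, ∑ b, ∑ c, -(p (a, b, c)) * Real.log (pAB (a, b)))
        + (∑ a, ∑ b, ∑ c, -(p (a, b, c)) * Real.log (pBC (b, c)))
        - ((∑ a, ∑ b, ∑ c, -(p (a, b, c)) * Real.log (p (a, b, c)))
          + (∑ a, ∑ b, ∑ c, -(p (a, b, c)) * Real.log (pB b))) := by
    simp only [Finset.sum_add_distrib, Finset.sum_sub_distrib]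
    ring
  rw [← expand]
  -- termwise lower bound by p - q
  have key1 : ∀ a b c, p (a, b, c) - pAB (a, b) * pBC (b, c) / pB b
      ≤ -(p (a, b, c)) * Real.log (pAB (a, b)) + -(p (a, b, c)) * Real.log (pBC (b, c))
        - -(p (a, b, c)) * Real.log (p (a, b, c)) - -(p (a, b, c)) * Real.log (pB b) := by
    intro a b c
    rcases eq_or_lt_of_le (hp0 (a, b, c)) with hP | hP
    · rw [← hP]
      have : (0:ℝ) ≤ pAB (a, b) * pBC (b, c) / pB b :=
        div_nonneg (mul_nonneg (hAB0 a b) (hBC0 b c)) (hB0 b)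
      simpa using by linarith
    · have hABp : 0 < pAB (a, b) := lt_of_lt_of_le hP (hleAB a b c)
      have hBCp : 0 < pBC (b, c) := lt_of_lt_of_le hP (hleBC a b c)
      have hBp : 0 < pB b := lt_of_lt_of_le hP (hleB a b c)
      have ht : 0 < pAB (a, b) * pBC (b, c) / (p (a, b, c) * pB b) := by positivity
      have hlog := Real.log_le_sub_one_of_pos ht
      rw [Real.log_div (by positivity) (by positivity), Real.log_mul hABp.ne' hBCp.ne',
        Real.log_mul hP.ne' hBp.ne'] at hlog
      have h2 := mul_le_mul_of_nonneg_left hlog hP.le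
      have h3 : p (a, b, c) * (pAB (a, b) * pBC (b, c) / (p (a, b, c) * pB b))
          = pAB (a, b) * pBC (b, c) / pB b := by
        field_simp
      nlinarith [h2, h3]
  -- the q-sum is at most 1
  have key2 : ∀ b, ∑ a, ∑ c, pAB (a, b) * pBC (b, c) / pB b ≤ pB b := by
    intro b
    rcases eq_or_lt_of_le (hB0 b) with h0 | h0
    · simp [← h0, div_zero]
    · have : ∑ a, ∑ c, pAB (a, b) * pBC (b, c) / pB b
          = (∑ a, pAB (a, b)) * (∑ c, pBC (b, c)) / pB b := by
        rw [Finset.sum_mul_sum, Finset.sum_div]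
        exact Finset.sum_congr rfl fun a _ => by rw [Finset.sum_div]
      rw [this, hABsum, hBCsum]
      exact le_of_eq (by field_simp)
  have keyq : ∑ a, ∑ b, ∑ c, pAB (a, b) * pBC (b, c) / pB b ≤ 1 := by
    rw [← reord3 (fun a b c => pAB (a, b) * pBC (b, c) / pB b)]
    calc ∑ b, ∑ c, ∑ a, pAB (a, b) * pBC (b, c) / pB b
        = ∑ b, ∑ a, ∑ c, pAB (a, b) * pBC (b, c) / pB b :=
          Finset.sum_congr rfl fun b _ => Finset.sum_comm
      _ ≤ ∑ b, pB b := Finset.sum_le_sum fun b _ => key2 b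
      _ = 1 := hpBsum
  calc (0:ℝ) = 1 - 1 := by ring
    _ ≤ (∑ a, ∑ b, ∑ c, p (a, b, c))
        - ∑ a, ∑ b, ∑ c, pAB (a, b) * pBC (b, c) / pB b := by rw [hsum']; linarith
    _ = ∑ a, ∑ b, ∑ c, (p (a, b, c) - pAB (a, b) * pBC (b, c) / pB b) := by
        simp only [Finset.sum_sub_distrib]
    _ ≤ _ := Finset.sum_le_sum fun a _ => Finset.sum_le_sum fun b _ =>
        Finset.sum_le_sum fun c _ => key1 a b c


end AuxCore

section AuxMeasure

variable {Ω : Type*} [MeasurableSpace Ω] (μ : Measure Ω) [IsProbabilityMeasure μ]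

lemma fiber_sum {α ι : Type*} [MeasurableSpace α] [MeasurableSingletonClass α] [Fintype ι]
    {X : Ω → α} (hX : Measurable X) {g : ι → α} (hg : Function.Injective g)
    {s : Set α} (hs : ∀ a, a ∈ s ↔ ∃ i, g i = a) :
    (μ (X ⁻¹' s)).toReal = ∑ i, (μ (X ⁻¹' {g i})).toReal := by
  have h1 : X ⁻¹' s = ⋃ i ∈ Finset.univ, X ⁻¹' {g i} := by
    ext ω
    simp [hs, eq_comm]
  rw [h1, measure_biUnion_finset ?hd (fun i _ => hX (measurableSet_singleton _)),
    ENNReal.toReal_sum (fun i _ => measure_ne_top μ _)]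
  case hd =>
    intro i _ j _ hij
    refine Set.disjoint_left.mpr fun ω h1 h2 => hij (hg ?_)
    simp only [Set.mem_preimage, Set.mem_singleton_iff] at h1 h2
    rw [← h1, ← h2]

lemma ent_comp_inj {α β : Type*} [Fintype α] [Fintype β] (X : Ω → α)
    (f : α → β) (hf : Function.Injective f) :
    ent μ (fun ω => f (X ω)) = ent μ X := by
  classical
  unfold ent
  rw [← Finset.sum_subset (Finset.subset_univ (Finset.univ.image f))]
  · rw [Finset.sum_image (fun a _ a' _ h => hf h)]
    refine Finset.sum_congr rfl fun a _ => ?_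
    have h2 : (fun ω => f (X ω)) ⁻¹' {f a} = X ⁻¹' {a} := by
      ext ω; simp [hf.eq_iff]
    rw [h2]
  · intro b _ hb
    have h3 : (fun ω => f (X ω)) ⁻¹' {b} = ∅ := by
      ext ω
      simp only [Set.mem_preimage, Set.mem_singleton_iff, Set.mem_empty_iff_false, iff_false]
      intro h
      exact hb (Finset.mem_image.mpr ⟨X ω, Finset.mem_univ _, h⟩)
    simp [h3]

lemma negMulLog_sum_le {ι : Type*} (s : Finset ι) (p : ι → ℝ) (hp : ∀ i ∈ s, 0 ≤ p i) :
    negMulLog (∑ i ∈ s, p i) ≤ ∑ i ∈ s, negMulLog (p i) := by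
  have ht : (0:ℝ) ≤ ∑ i ∈ s, p i := Finset.sum_nonneg hp
  have h1 : negMulLog (∑ i ∈ s, p i) = ∑ i ∈ s, (-(p i) * Real.log (∑ j ∈ s, p j)) := by
    rw [negMulLog, ← Finset.sum_neg_distrib, Finset.sum_mul]
  rw [h1]
  refine Finset.sum_le_sum fun i hi => ?_
  rw [negMulLog]
  rcases eq_or_lt_of_le (hp i hi) with h | h
  · simp [← h]
  · have hle : p i ≤ ∑ j ∈ s, p j := Finset.single_le_sum hp hi
    have := Real.log_le_log h hle
    nlinarith



variable {Ω : Type*} [MeasurableSpace Ω] (μ : Measure Ω) [IsProbabilityMeasure μ]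
variable {α β γ : Type*} [Fintype α] [MeasurableSpace α] [MeasurableSingletonClass α]
  [Fintype β] [MeasurableSpace β] [MeasurableSingletonClass β]
  [Fintype γ] [MeasurableSpace γ] [MeasurableSingletonClass γ]

lemma marg_snd (A : Ω → α) (B : Ω → β) (hA : Measurable A) (hB : Measurable B) (b : β) :
    (μ (B ⁻¹' {b})).toReal = ∑ a : α, (μ ((fun ω => (A ω, B ω)) ⁻¹' {(a, b)})).toReal := by
  have hW : Measurable (fun ω => (A ω, B ω)) := hA.prodMk hB
  have h1 : B ⁻¹' {b} = (fun ω => (A ω, B ω)) ⁻¹' {x : α × β | x.2 = b} := by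
    ext ω; simp
  rw [h1]
  exact fiber_sum μ hW (g := fun a => (a, b)) (fun a a' h => (Prod.mk.injEq _ _ _ _ ▸ h).1)
    (fun x => by cases x; simp [eq_comm, Prod.ext_iff])

lemma ent_le_ent_pair (A : Ω → α) (B : Ω → β) (hA : Measurable A) (hB : Measurable B) :
    ent μ B ≤ ent μ (fun ω => (A ω, B ω)) := by
  unfold ent
  rw [Fintype.sum_prod_type_right]
  refine Finset.sum_le_sum fun b _ => ?_
  rw [marg_snd μ A B hA hB b]
  exact negMulLog_sum_le _ _ (fun a _ => ENNReal.toReal_nonneg)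


section Wrap
variable {Ω : Type*} [MeasurableSpace Ω] (μ : Measure Ω) [IsProbabilityMeasure μ]
variable {α β γ : Type*} [Fintype α] [MeasurableSpace α] [MeasurableSingletonClass α]
  [Fintype β] [MeasurableSpace β] [MeasurableSingletonClass β]
  [Fintype γ] [MeasurableSpace γ] [MeasurableSingletonClass γ]

lemma fiber_sum' {α ι : Type*} [MeasurableSpace α] [MeasurableSingletonClass α] [Fintype ι]
    {X : Ω → α} (hX : Measurable X) {g : ι → α} (hg : Function.Injective g)
    {s : Set α} (hs : ∀ a, a ∈ s ↔ ∃ i, g i = a) :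
    (μ (X ⁻¹' s)).toReal = ∑ i, (μ (X ⁻¹' {g i})).toReal := by
  have h1 : X ⁻¹' s = ⋃ i ∈ Finset.univ, X ⁻¹' {g i} := by
    ext ω; simp [hs, eq_comm]
  rw [h1, measure_biUnion_finset ?hd (fun i _ => hX (measurableSet_singleton _)),
    ENNReal.toReal_sum (fun i _ => measure_ne_top μ _)]
  case hd =>
    intro i _ j _ hij
    refine Set.disjoint_left.mpr fun ω h1 h2 => hij (hg ?_)
    simp only [Set.mem_preimage, Set.mem_singleton_iff] at h1 h2
    rw [← h1, ← h2]

lemma ent_submod (A : Ω → α) (B : Ω → β) (C : Ω → γ)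
    (hA : Measurable A) (hB : Measurable B) (hC : Measurable C) :
    ent μ (fun ω => (A ω, B ω, C ω)) + ent μ B
      ≤ ent μ (fun ω => (A ω, B ω)) + ent μ (fun ω => (B ω, C ω)) := by
  have hW : Measurable fun ω => (A ω, B ω, C ω) := hA.prodMk (hB.prodMk hC)
  refine submod_core (fun x => (μ ((fun ω => (A ω, B ω, C ω)) ⁻¹' {x})).toReal)
    (fun x => (μ ((fun ω => (A ω, B ω)) ⁻¹' {x})).toReal)
    (fun x => (μ ((fun ω => (B ω, C ω)) ⁻¹' {x})).toReal)
    (fun b => (μ (B ⁻¹' {b})).toReal)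
    (fun x => ENNReal.toReal_nonneg) ?_ ?_ ?_ ?_
  · intro a b
    have h1 : (fun ω => (A ω, B ω)) ⁻¹' {(a, b)}
        = (fun ω => (A ω, B ω, C ω)) ⁻¹' {x : α × β × γ | x.1 = a ∧ x.2.1 = b} := by
      ext ω; simp [Prod.ext_iff]
    beta_reduce
    rw [h1]
    exact fiber_sum' μ hW (g := fun c => (a, b, c))
      (fun c c' h => by simpa using h)
      (fun x => by obtain ⟨x1, x2, x3⟩ := x; simp [Prod.ext_iff]; aesop)
  · intro b c
    have h1 : (fun ω => (B ω, C ω)) ⁻¹' {(b, c)}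
        = (fun ω => (A ω, B ω, C ω)) ⁻¹' {x : α × β × γ | x.2.1 = b ∧ x.2.2 = c} := by
      ext ω; simp [Prod.ext_iff]
    beta_reduce
    rw [h1]
    exact fiber_sum' μ hW (g := fun a => (a, b, c))
      (fun a a' h => by simpa using h)
      (fun x => by obtain ⟨x1, x2, x3⟩ := x; simp [Prod.ext_iff]; aesop)
  · intro b
    have h1 : B ⁻¹' {b}
        = (fun ω => (A ω, B ω, C ω)) ⁻¹' {x : α × β × γ | x.2.1 = b} := by
      ext ω; simp
    have h2 := fiber_sum' μ (ι := α × γ) hW (g := fun y => (y.1, b, y.2))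
      (fun y y' h => by
        obtain ⟨y1, y2⟩ := y; obtain ⟨y1', y2'⟩ := y'
        simpa [Prod.ext_iff] using h)
      (s := {x : α × β × γ | x.2.1 = b})
      (fun x => by obtain ⟨x1, x2, x3⟩ := x; simp [Prod.ext_iff]; aesop)
    beta_reduce
    rw [h1, h2, Fintype.sum_prod_type]
  · have h1 : (Set.univ : Set Ω) = (fun ω => (A ω, B ω, C ω)) ⁻¹' Set.univ := rfl
    have h2 := fiber_sum' μ (ι := α × β × γ) hW (g := id)
      (fun x y h => h) (s := (Set.univ : Set (α × β × γ))) (fun x => by simp)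
    have h3 : (μ (Set.univ : Set Ω)).toReal = 1 := by simp
    simp only [id] at h2
    beta_reduce
    rw [← h2, ← h1, h3]

end Wrap
end AuxMeasure

/-- H(M) <= I(M;Z) + H(M | (Y,K,S)) + H(K | (Z,S)) + I((M,X);Y | (K,Z,S)) + H(S|Z). -/
theorem stmt_2
    {Ω : Type*} [MeasurableSpace Ω] (μ : Measure Ω) [IsProbabilityMeasure μ]
    {𝓜 𝓧 𝓨 𝓩 𝓢 𝓚 : Type*}
    [Fintype 𝓜] [Nonempty 𝓜] [MeasurableSpace 𝓜] [DiscreteMeasurableSpace 𝓜]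
    [Fintype 𝓧] [Nonempty 𝓧] [MeasurableSpace 𝓧] [DiscreteMeasurableSpace 𝓧]
    [Fintype 𝓨] [Nonempty 𝓨] [MeasurableSpace 𝓨] [DiscreteMeasurableSpace 𝓨]
    [Fintype 𝓩] [Nonempty 𝓩] [MeasurableSpace 𝓩] [DiscreteMeasurableSpace 𝓩]
    [Fintype 𝓢] [Nonempty 𝓢] [MeasurableSpace 𝓢] [DiscreteMeasurableSpace 𝓢]
    [Fintype 𝓚] [Nonempty 𝓚] [MeasurableSpace 𝓚] [DiscreteMeasurableSpace 𝓚]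
    (M : Ω → 𝓜) (X : Ω → 𝓧) (Y : Ω → 𝓨) (Z : Ω → 𝓩) (S : Ω → 𝓢) (K : Ω → 𝓚)
    (hM : Measurable M) (hX : Measurable X) (hY : Measurable Y)
    (hZ : Measurable Z) (hS : Measurable S) (hK : Measurable K) :
    ent μ M ≤
      mutInfo μ M Z
      + condEnt μ M (fun ω => (Y ω, K ω, S ω))
      + condEnt μ K (fun ω => (Z ω, S ω))
      + condMutInfo μ (fun ω => (M ω, X ω)) Y (fun ω => (K ω, Z ω, S ω))
      + condEnt μ S Z := by
  classical
  have hYKS : Measurable fun ω => (Y ω, K ω, S ω) := hY.prodMk (hK.prodMk hS)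
  have hMKZS : Measurable fun ω => (M ω, K ω, Z ω, S ω) :=
    hM.prodMk (hK.prodMk (hZ.prodMk hS))
  have hKS : Measurable fun ω => (K ω, S ω) := hK.prodMk hS
  have hMZ : Measurable fun ω => (M ω, Z ω) := hM.prodMk hZ
  have F1 := ent_submod μ M (fun ω => (Y ω, K ω, S ω)) Z hM hYKS hZ
  have F2 := ent_submod μ Y (fun ω => (M ω, K ω, Z ω, S ω)) X hY hMKZS hX
  have F3 := ent_le_ent_pair μ (fun ω => (K ω, S ω)) (fun ω => (M ω, Z ω)) hKS hMZ
  beta_reduce at F1 F2 F3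
  have C0 : ent μ (fun ω => (Z ω, S ω)) = ent μ (fun ω => (S ω, Z ω)) :=
    ent_comp_inj μ (fun ω => (S ω, Z ω)) (fun x => (x.2, x.1))
      (fun x y h => by simp_all [Prod.ext_iff])
  have C1 : ent μ (fun ω => (M ω, (Y ω, K ω, S ω), Z ω))
      = ent μ (fun ω => (Y ω, M ω, K ω, Z ω, S ω)) :=
    ent_comp_inj μ (fun ω => (Y ω, M ω, K ω, Z ω, S ω))
      (fun x => (x.2.1, (x.1, x.2.2.1, x.2.2.2.2), x.2.2.2.1))
      (fun x y h => by simp_all [Prod.ext_iff])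
  have C2 : ent μ (fun ω => ((Y ω, K ω, S ω), Z ω))
      = ent μ (fun ω => (Y ω, K ω, Z ω, S ω)) :=
    ent_comp_inj μ (fun ω => (Y ω, K ω, Z ω, S ω))
      (fun x => ((x.1, x.2.1, x.2.2.2), x.2.2.1))
      (fun x y h => by simp_all [Prod.ext_iff])
  have C3 : ent μ (fun ω => ((M ω, K ω, Z ω, S ω), X ω))
      = ent μ (fun ω => ((M ω, X ω), K ω, Z ω, S ω)) :=
    ent_comp_inj μ (fun ω => ((M ω, X ω), K ω, Z ω, S ω))
      (fun t => ((t.1.1, t.2), t.1.2))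
      (fun x y h => by simp_all [Prod.ext_iff])
  have C4 : ent μ (fun ω => (Y ω, (M ω, K ω, Z ω, S ω), X ω))
      = ent μ (fun ω => (((M ω, X ω), Y ω), K ω, Z ω, S ω)) :=
    ent_comp_inj μ (fun ω => (((M ω, X ω), Y ω), K ω, Z ω, S ω))
      (fun t => (t.1.2, (t.1.1.1, t.2), t.1.1.2))
      (fun x y h => by simp_all [Prod.ext_iff])
  have C5 : ent μ (fun ω => ((K ω, S ω), M ω, Z ω))
      = ent μ (fun ω => (M ω, K ω, Z ω, S ω)) :=
    ent_comp_inj μ (fun ω => (M ω, K ω, Z ω, S ω))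
      (fun t => ((t.2.1, t.2.2.2), t.1, t.2.2.1))
      (fun x y h => by simp_all [Prod.ext_iff])
  simp only [mutInfo, condEnt, condMutInfo]
  linarith [F1, F2, F3, C0, C1, C2, C3, C4, C5]
end

section
/- Let X, Y, Z, S, Q be random variables on a common probability space, each taking values in a nonempty finite set. If Q and Y are conditionally independent given (X, Z, S), then I(X ; Y | (Z, S, Q)) + H(S | (Z, Q)) ≤ I(X ; Y | (Z, S)) + H(S | Z). -/
open MeasureTheory ProbabilityTheory Real

/-!
Written in joint entropies, the hypothesis says `H(X,Y,Z,S,Q) = H(X,Z,S,Q) + H(X,Y,Z,S) - H(X,Z,S)`;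
substituting it, the claim becomes `H(Y,S,Q,Z) + H(Z) ≤ H(Y,S,Z) + H(Q,Z)`, i.e.
`I(Y,S ; Q | Z) ≥ 0`. This submodularity of entropy is proved fibrewise over `Z`, where it is
subadditivity for an unnormalised joint distribution, itself Gibbs' inequality against the
product of the marginals.
-/

open Finset

lemma negMulLog_add_mul_log_le {p r : ℝ} (hp : 0 ≤ p) (hr : 0 ≤ r) (hpr : r = 0 → p = 0) :
    negMulLog p + p * log r ≤ r - p := by
  rcases hp.eq_or_lt with rfl | hp
  · simpa using hr
  have hr : 0 < r := hr.lt_of_ne fun h => hp.ne' (hpr h.symm)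
  have h := mul_le_mul_of_nonneg_left (negMulLog_le_one_sub_self (div_nonneg hp.le hr.le)) hr.le
  rw [negMulLog, log_div hp.ne' hr.ne'] at h
  field_simp at h
  rw [negMulLog]
  linarith

lemma sum_negMulLog_add_negMulLog_sum_le {α β : Type*} [Fintype α] [Fintype β]
    (q : α → β → ℝ) (hq : ∀ a b, 0 ≤ q a b) :
    ∑ a, ∑ b, negMulLog (q a b) + negMulLog (∑ a, ∑ b, q a b)
      ≤ ∑ a, negMulLog (∑ b, q a b) + ∑ b, negMulLog (∑ a, q a b) := by
  set qa : α → ℝ := fun a => ∑ b, q a b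
  set qb : β → ℝ := fun b => ∑ a, q a b
  set m : ℝ := ∑ a, ∑ b, q a b
  have hqa : ∀ a b, q a b ≤ qa a := fun a b => single_le_sum (fun b _ => hq a b) (mem_univ b)
  have hqb : ∀ a b, q a b ≤ qb b := fun a b => single_le_sum (fun a _ => hq a b) (mem_univ a)
  have hm : ∀ a, qa a ≤ m := fun a =>
    single_le_sum (fun a _ => sum_nonneg fun b _ => hq a b) (mem_univ a)
  -- Gibbs' inequality termwise against `qa a * qb b / m`, whose total mass is again `m`.
  have term : ∀ a b, negMulLog (q a b) + q a b * (log (qa a) + log (qb b) - log m)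
      ≤ qa a * qb b / m - q a b := by
    intro a b
    rcases (hq a b).eq_or_lt with h0 | h0
    · rw [← h0, negMulLog_zero, zero_mul, add_zero, sub_zero]
      exact div_nonneg (mul_nonneg (h0.le.trans (hqa a b)) (h0.le.trans (hqb a b)))
        (h0.le.trans ((hqa a b).trans (hm a)))
    have ha := h0.trans_le (hqa a b)
    have hb := h0.trans_le (hqb a b)
    have hm := ha.trans_le (hm a)
    rw [← log_mul ha.ne' hb.ne', ← log_div (by positivity) hm.ne']
    exact negMulLog_add_mul_log_le h0.le (by positivity) fun h => absurd h (by positivity)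
  have sum_rhs : ∑ a, ∑ b, (qa a * qb b / m - q a b) = 0 := by
    simp only [sum_sub_distrib, ← sum_div, ← mul_sum, ← sum_mul]
    rw [show ∑ b, qb b = m from sum_comm, mul_self_div_self, sub_self]
  have sum_lhs : ∑ a, ∑ b, (negMulLog (q a b) + q a b * (log (qa a) + log (qb b) - log m))
      = ∑ a, ∑ b, negMulLog (q a b) + negMulLog m
        - (∑ a, negMulLog (qa a) + ∑ b, negMulLog (qb b)) := by
    simp only [mul_sub, mul_add, sum_add_distrib, sum_sub_distrib, ← sum_mul]
    rw [sum_comm (f := fun a b => q a b * log (qb b))]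
    have hqa' : ∀ a, ∑ b, q a b = qa a := fun _ => rfl
    have hqb' : ∀ b, ∑ a, q a b = qb b := fun _ => rfl
    have hm' : ∑ a, qa a = m := rfl
    simp only [← sum_mul, hqa', hqb', hm']
    simp only [negMulLog_eq_neg, sum_neg_distrib]
    ring
  have := sum_le_sum fun a (_ : a ∈ univ) => sum_le_sum fun b (_ : b ∈ univ) => term a b
  linarith

section Entropy

variable {Ω : Type*} [MeasurableSpace Ω] (μ : Measure Ω)

lemma mem_range_of_negMulLog_measure_preimage_ne_zero {δ : Type*} {T : Ω → δ} {d : δ}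
    (hd : negMulLog (μ (T ⁻¹' {d})).toReal ≠ 0) : d ∈ Set.range T := by
  by_contra hT
  simp [Set.preimage_singleton_eq_empty.2 hT] at hd

lemma ent_eq_of_eq_iff {δ ε : Type*} [Fintype δ] [Fintype ε] {T₁ : Ω → δ} {T₂ : Ω → ε}
    (h : ∀ ω ω', T₁ ω = T₁ ω' ↔ T₂ ω = T₂ ω') : ent μ T₁ = ent μ T₂ := by
  have fiber_eq : ∀ ω, T₁ ⁻¹' {T₁ ω} = T₂ ⁻¹' {T₂ ω} := fun ω => by
    ext ω'
    exact h ω' ω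
  refine sum_bij_ne_zero
    (fun _ _ hd => T₂ (mem_range_of_negMulLog_measure_preimage_ne_zero μ hd).choose)
    (fun _ _ _ => mem_univ _) ?_ ?_ ?_
  · intro d₁ _ hd₁ d₂ _ hd₂ heq
    rw [← (mem_range_of_negMulLog_measure_preimage_ne_zero μ hd₁).choose_spec,
      ← (mem_range_of_negMulLog_measure_preimage_ne_zero μ hd₂).choose_spec]
    exact (h _ _).2 heq
  · intro e _ he
    obtain ⟨ω, rfl⟩ := mem_range_of_negMulLog_measure_preimage_ne_zero μ he
    have hd : negMulLog (μ (T₁ ⁻¹' {T₁ ω})).toReal ≠ 0 := by rwa [fiber_eq]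
    exact ⟨T₁ ω, mem_univ _, hd,
      (h _ _).1 (mem_range_of_negMulLog_measure_preimage_ne_zero μ hd).choose_spec⟩
  · intro d _ hd
    rw [← fiber_eq, (mem_range_of_negMulLog_measure_preimage_ne_zero μ hd).choose_spec]

lemma ent_prod_eq_sum {α β : Type*} [Fintype α] [Fintype β] (U : Ω → α) (V : Ω → β) :
    ent μ (fun ω => (U ω, V ω)) = ∑ a, ∑ b, negMulLog (μ.real (U ⁻¹' {a} ∩ V ⁻¹' {b})) := by
  simp only [ent, Fintype.sum_prod_type, ← Set.singleton_prod_singleton, Set.mk_preimage_prod,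
    measureReal_def]

lemma measureReal_eq_sum_inter_preimage_singleton [IsFiniteMeasure μ] {β : Type*} [Fintype β]
    [MeasurableSpace β] [MeasurableSingletonClass β] {V : Ω → β} (hV : Measurable V)
    (s : Set Ω) :
    μ.real s = ∑ b, μ.real (s ∩ V ⁻¹' {b}) := by
  rw [← measureReal_restrict_apply_univ, ← Set.preimage_univ (f := V), ← coe_univ,
    ← sum_measureReal_preimage_singleton _ fun b _ => hV (measurableSet_singleton b)]
  simp only [measureReal_restrict_apply (hV (measurableSet_singleton _)), Set.inter_comm s]

lemma ent_triple_add_ent_le [IsFiniteMeasure μ] {α β γ : Type*} [Fintype α] [Fintype β]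
    [Fintype γ] [MeasurableSpace α] [MeasurableSingletonClass α] [MeasurableSpace β]
    [MeasurableSingletonClass β] {A : Ω → α} {B : Ω → β} (C : Ω → γ)
    (hA : Measurable A) (hB : Measurable B) :
    ent μ (fun ω => (C ω, A ω, B ω)) + ent μ C
      ≤ ent μ (fun ω => (C ω, A ω)) + ent μ (fun ω => (C ω, B ω)) := by
  set p : γ → α → β → ℝ := fun c a b => μ.real (C ⁻¹' {c} ∩ A ⁻¹' {a} ∩ B ⁻¹' {b})
  have hCAB : ent μ (fun ω => (C ω, A ω, B ω)) = ∑ c, ∑ a, ∑ b, negMulLog (p c a b) := by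
    simp only [ent_prod_eq_sum, Fintype.sum_prod_type, ← Set.singleton_prod_singleton,
      Set.mk_preimage_prod, Set.inter_assoc, p]
  have hCA : ent μ (fun ω => (C ω, A ω)) = ∑ c, ∑ a, negMulLog (∑ b, p c a b) := by
    refine (ent_prod_eq_sum μ C A).trans
      (sum_congr rfl fun c _ => sum_congr rfl fun a _ => ?_)
    rw [measureReal_eq_sum_inter_preimage_singleton μ hB]
  have hCB : ent μ (fun ω => (C ω, B ω)) = ∑ c, ∑ b, negMulLog (∑ a, p c a b) := by
    refine (ent_prod_eq_sum μ C B).trans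
      (sum_congr rfl fun c _ => sum_congr rfl fun b _ => ?_)
    rw [measureReal_eq_sum_inter_preimage_singleton μ hA]
    simp only [p, Set.inter_right_comm _ (B ⁻¹' {b})]
  have hC : ent μ C = ∑ c, negMulLog (∑ a, ∑ b, p c a b) := by
    refine sum_congr rfl fun c _ => ?_
    rw [← measureReal_def, measureReal_eq_sum_inter_preimage_singleton μ hA]
    simp only [measureReal_eq_sum_inter_preimage_singleton μ hB (C ⁻¹' {c} ∩ A ⁻¹' {_}), p]
  rw [hCAB, hCA, hCB, hC, ← sum_add_distrib, ← sum_add_distrib]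
  exact sum_le_sum fun c _ =>
    sum_negMulLog_add_negMulLog_sum_le (p c) fun _ _ => measureReal_nonneg

end Entropy

theorem stmt_6_general
    {Ω : Type*} [MeasurableSpace Ω] (μ : Measure Ω) [IsProbabilityMeasure μ]
    {𝓧 𝓨 𝓩 𝓢 𝓠 : Type*}
    [Fintype 𝓧]
    [Fintype 𝓨] [MeasurableSpace 𝓨] [DiscreteMeasurableSpace 𝓨]
    [Fintype 𝓩]
    [Fintype 𝓢] [MeasurableSpace 𝓢] [DiscreteMeasurableSpace 𝓢]
    [Fintype 𝓠] [MeasurableSpace 𝓠] [DiscreteMeasurableSpace 𝓠]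
    (X : Ω → 𝓧) (Y : Ω → 𝓨) (Z : Ω → 𝓩) (S : Ω → 𝓢) (Q : Ω → 𝓠)
    (hY : Measurable Y)
    (hS : Measurable S) (hQ : Measurable Q)
    (hMarkov : condMutInfo μ Q Y (fun ω => (X ω, Z ω, S ω)) = 0) :
    condMutInfo μ X Y (fun ω => (Z ω, S ω, Q ω)) + condEnt μ S (fun ω => (Z ω, Q ω))
      ≤ condMutInfo μ X Y (fun ω => (Z ω, S ω)) + condEnt μ S Z := by
  simp only [condMutInfo, condEnt] at hMarkov ⊢
  have hXYZSQ : ent μ (fun ω => ((X ω, Y ω), Z ω, S ω, Q ω))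
      = ent μ (fun ω => ((Q ω, Y ω), X ω, Z ω, S ω)) :=
    ent_eq_of_eq_iff μ fun _ _ => by simp only [Prod.mk.injEq]; tauto
  have hXYZS : ent μ (fun ω => ((X ω, Y ω), Z ω, S ω)) = ent μ (fun ω => (Y ω, X ω, Z ω, S ω)) :=
    ent_eq_of_eq_iff μ fun _ _ => by simp only [Prod.mk.injEq]; tauto
  have hXZSQ : ent μ (fun ω => (Q ω, X ω, Z ω, S ω)) = ent μ (fun ω => (X ω, Z ω, S ω, Q ω)) :=
    ent_eq_of_eq_iff μ fun _ _ => by simp only [Prod.mk.injEq]; tauto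
  have hYZSQ : ent μ (fun ω => (Z ω, Q ω, Y ω, S ω)) = ent μ (fun ω => (Y ω, Z ω, S ω, Q ω)) :=
    ent_eq_of_eq_iff μ fun _ _ => by simp only [Prod.mk.injEq]; tauto
  have hYZS : ent μ (fun ω => (Z ω, Y ω, S ω)) = ent μ (fun ω => (Y ω, Z ω, S ω)) :=
    ent_eq_of_eq_iff μ fun _ _ => by simp only [Prod.mk.injEq]; tauto
  have hZSQ : ent μ (fun ω => (S ω, Z ω, Q ω)) = ent μ (fun ω => (Z ω, S ω, Q ω)) :=
    ent_eq_of_eq_iff μ fun _ _ => by simp only [Prod.mk.injEq]; tauto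
  have hZS : ent μ (fun ω => (S ω, Z ω)) = ent μ (fun ω => (Z ω, S ω)) :=
    ent_eq_of_eq_iff μ fun _ _ => by simp only [Prod.mk.injEq]; tauto
  linarith [ent_triple_add_ent_le μ Z hQ (hY.prodMk hS)]

/-- if Q ⊥ Y | (X,Z,S) then
I(X;Y|(Z,S,Q)) + H(S|(Z,Q)) <= I(X;Y|(Z,S)) + H(S|Z). -/
theorem stmt_6
    {Ω : Type*} [MeasurableSpace Ω] (μ : Measure Ω) [IsProbabilityMeasure μ]
    {𝓧 𝓨 𝓩 𝓢 𝓠 : Type*}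
    [Fintype 𝓧] [Nonempty 𝓧] [MeasurableSpace 𝓧] [DiscreteMeasurableSpace 𝓧]
    [Fintype 𝓨] [Nonempty 𝓨] [MeasurableSpace 𝓨] [DiscreteMeasurableSpace 𝓨]
    [Fintype 𝓩] [Nonempty 𝓩] [MeasurableSpace 𝓩] [DiscreteMeasurableSpace 𝓩]
    [Fintype 𝓢] [Nonempty 𝓢] [MeasurableSpace 𝓢] [DiscreteMeasurableSpace 𝓢]
    [Fintype 𝓠] [Nonempty 𝓠] [MeasurableSpace 𝓠] [DiscreteMeasurableSpace 𝓠]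
    (X : Ω → 𝓧) (Y : Ω → 𝓨) (Z : Ω → 𝓩) (S : Ω → 𝓢) (Q : Ω → 𝓠)
    (hX : Measurable X) (hY : Measurable Y) (hZ : Measurable Z)
    (hS : Measurable S) (hQ : Measurable Q)
    (hMarkov : condMutInfo μ Q Y (fun ω => (X ω, Z ω, S ω)) = 0) :
    condMutInfo μ X Y (fun ω => (Z ω, S ω, Q ω)) + condEnt μ S (fun ω => (Z ω, Q ω))
      ≤ condMutInfo μ X Y (fun ω => (Z ω, S ω)) + condEnt μ S Z :=
  stmt_6_general μ X Y Z S Q hY hS hQ hMarkov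
end
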